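/- arXiv:2505.18868 — 3 statements merged into one kernel-verified Lean document; each statement's English description precedes it below -/
import Mathlib

section
/- Let f ∈ ℂ{x,y} be reduced and let ω ∈ Ω¹ = ℂ{x,y}dx + ℂ{x,y}dy. Then there exists g ∈ ℂ{x,y} with gcd(g,f) = 1 and gω ∈ F(f) := {p·df + f·η : p ∈ ℂ{x,y}, η ∈ Ω¹} if and only if ω ∧ df = h·f·dx∧dy for some h ∈ ℂ{x,y}. -/
/-! If `g • ω = p • df + f • η` then `g * (ω ∧ df) = f * (η ∧ df)`, and since `ℂ⟦x, y⟧` is a UFD and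
`g` is prime to `f`, `f` divides `ω ∧ df`.

Conversely, if `ω ∧ df = h * f` then `(f_x + c f_y) • ω = (ω₁ + c ω₂) • df + f • h • (c, -1)` for
every constant `c`. A prime `q` never divides both of its own partial derivatives (one of them has
smaller order than `q`), so by the Leibniz rule a prime factor `q` of the squarefree `f` does not
divide both `f_x` and `f_y`. Hence each of the finitely many prime factors of `f` divides
`f_x + c f_y` for at most one `c`, and any other `c` makes `f_x + c f_y` prime to `f`. -/

open MvPowerSeries

noncomputable section

/-- `ℂ{x,y}`, modeled as formal power series in two variables. -/
abbrev PS := MvPowerSeries (Fin 2) ℂ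

/-- Formal partial derivative with respect to variable `i`. -/
noncomputable def pd (i : Fin 2) (f : PS) : PS :=
  fun m => ((m i : ℂ) + 1) * MvPowerSeries.coeff (m + Finsupp.single i 1) f

/-- The pair `(f_x, f_y)` representing the differential `df = f_x dx + f_y dy`;
a 1-form `A dx + B dy` is modeled as the pair `(A, B)`. -/
noncomputable def dd (f : PS) : PS × PS := (pd 0 f, pd 1 f)

/-- `(A dx + B dy) ∧ (C dx + D dy) = (A D - B C) dx∧dy`, recorded by its coefficient. -/
def wedge (ω η : PS × PS) : PS := ω.1 * η.2 - ω.2 * η.1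

/-- The Saito module `S(f)`: 1-forms `ω` with `ω ∧ df = h·f·dx∧dy` for some `h`. -/
def SaitoSet (f : PS) : Set (PS × PS) := {ω | ∃ h : PS, wedge ω (dd f) = h * f}

/-- `F(f) = ℂ{x,y}·df + f·Ω¹`. -/
def FSet (f : PS) : Set (PS × PS) := {ω | ∃ (p : PS) (η : PS × PS), ω = p • dd f + f • η}

namespace MvPowerSeries

instance {σ R : Type*} [CommRing R] [IsDomain R] : IsDomain (MvPowerSeries σ R) :=
  NoZeroDivisors.to_isDomain _

instance {K : Type*} [Field K] : IsPrincipalIdealRing (MvPowerSeries (Fin 1) K) :=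
  IsPrincipalIdealRing.of_surjective (renameEquiv K (Equiv.ofUnique Unit (Fin 1)))
    (renameEquiv K _).surjective

/-- `R⟦X⟧` is a UFD for every principal ideal domain `R`, here `R = K⟦y⟧`. -/
instance {K : Type*} [Field K] : UniqueFactorizationMonoid (MvPowerSeries (Fin 2) K) :=
  (finSuccEquiv K 1).toMulEquiv.symm.uniqueFactorizationMonoid inferInstance

theorem order_le_order_of_dvd {σ R : Type*} [CommSemiring R] {p q : MvPowerSeries σ R}
    (h : q ∣ p) : q.order ≤ p.order := by
  obtain ⟨s, rfl⟩ := h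
  exact le_self_add.trans le_order_mul

theorem exists_order_pderiv_lt {σ R : Type*} [CommRing R] [IsDomain R] [CharZero R]
    {q : MvPowerSeries σ R} (hq : q ≠ 0) (hq₀ : constantCoeff q = 0) :
    ∃ i, (pderiv R i q).order < q.order := by
  obtain ⟨m, hm, hdeg⟩ := exists_coeff_ne_zero_and_order (ne_zero_iff_order_finite.mp hq)
  have hm₀ : m ≠ 0 := by
    rintro rfl
    exact hm (by rwa [coeff_zero_eq_constantCoeff_apply])
  obtain ⟨i, hi⟩ := Finsupp.ne_iff.mp hm₀
  obtain ⟨n, rfl⟩ : ∃ n, m = n + Finsupp.single i 1 :=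
    ⟨m - Finsupp.single i 1, (tsub_add_cancel_of_le (Finsupp.single_le_iff.mpr
      (Nat.one_le_iff_ne_zero.mpr hi))).symm⟩
  have hn : coeff n (pderiv R i q) ≠ 0 := by
    rw [coeff_pderiv]
    exact mul_ne_zero hm (Nat.cast_add_one_ne_zero (n i))
  refine ⟨i, (order_le hn).trans_lt ?_⟩
  rw [← hdeg, map_add, Finsupp.degree_single]
  exact_mod_cast Nat.lt_succ_self _

theorem exists_not_dvd_pderiv_self {σ K : Type*} [Field K] [CharZero K]
    {q : MvPowerSeries σ K} (hq : q ≠ 0) (hq₁ : ¬IsUnit q) : ∃ i, ¬q ∣ pderiv K i q := by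
  have hq₀ : constantCoeff q = 0 := by
    by_contra h
    exact hq₁ (isUnit_iff_constantCoeff.mpr (Ne.isUnit h))
  obtain ⟨i, hi⟩ := exists_order_pderiv_lt hq hq₀
  exact ⟨i, fun h => (order_le_order_of_dvd h).not_gt hi⟩

end MvPowerSeries

theorem Prime.not_dvd_derivation_of_squarefree {R A : Type*} [CommSemiring R] [CommRing A]
    [Algebra R A] (D : Derivation R A A) {q f : A} (hq : Prime q) (hf : Squarefree f)
    (hqf : q ∣ f) (hDq : ¬q ∣ D q) : ¬q ∣ D f := by
  obtain ⟨e, rfl⟩ := hqf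
  have hqe : ¬q ∣ e := fun ⟨e', he'⟩ => hq.not_isUnit (hf q ⟨e', by rw [he', mul_assoc]⟩)
  intro h
  rw [Derivation.leibniz, smul_eq_mul, smul_eq_mul, dvd_add_right (dvd_mul_right q _)] at h
  exact (hq.dvd_or_dvd h).elim hqe hDq

theorem exists_isRelPrime_add_smul {K R : Type*} [Field K] [Infinite K] [CommRing R]
    [UniqueFactorizationMonoid R] [Algebra K R] {f : R} (a b : R) (hf : f ≠ 0)
    (hab : ∀ q, Prime q → q ∣ f → q ∣ a → ¬q ∣ b) : ∃ c : K, IsRelPrime (a + c • b) f := by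
  classical
  set bad : Set K := ⋃ q ∈ (UniqueFactorizationMonoid.factors f).toFinset, {c | q ∣ a + c • b}
  have hbad : bad.Finite := by
    refine Set.Finite.biUnion (Finset.finite_toSet _) fun q hq => Set.Subsingleton.finite ?_
    have hqp : Prime q := UniqueFactorizationMonoid.prime_of_factor q (Multiset.mem_toFinset.mp hq)
    intro c₁ hc₁ c₂ hc₂
    by_contra hne
    have hb : q ∣ b := by
      have hu : IsUnit (algebraMap K R (c₁ - c₂)) := (sub_ne_zero.mpr hne).isUnit.map _
      rw [← hu.dvd_mul_left, ← Algebra.smul_def, sub_smul]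
      simpa using dvd_sub hc₁ hc₂
    have ha : q ∣ a := by simpa using dvd_sub hc₁ (dvd_smul_of_dvd c₁ hb)
    exact hab q hqp (UniqueFactorizationMonoid.dvd_of_mem_factors
      (Multiset.mem_toFinset.mp hq)) ha hb
  obtain ⟨c, -, hc⟩ := Set.infinite_univ.exists_notMem_finite hbad
  refine ⟨c, ((UniqueFactorizationMonoid.isRelPrime_iff_no_prime_factors hf).mpr
    fun d hdf hdg hd => hc ?_).symm⟩
  obtain ⟨q, hq, hdq⟩ := UniqueFactorizationMonoid.exists_mem_factors_of_dvd hf hd.irreducible hdf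
  exact Set.mem_biUnion (Multiset.mem_toFinset.mpr hq) (hdq.symm.dvd.trans hdg)

theorem pd_eq_pderiv (i : Fin 2) (f : PS) : pd i f = pderiv ℂ i f := by
  ext m
  exact (coeff_pderiv f m).trans (mul_comm _ _) |>.symm

theorem not_dvd_pd_one_of_dvd_pd_zero {f q : PS} (hf : Squarefree f) (hq : Prime q)
    (hqf : q ∣ f) (h₀ : q ∣ pd 0 f) : ¬q ∣ pd 1 f := by
  intro h₁
  obtain ⟨i, hi⟩ := exists_not_dvd_pderiv_self hq.ne_zero hq.not_isUnit
  refine hq.not_dvd_derivation_of_squarefree (pderiv ℂ i) hf hqf hi ?_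
  rw [← pd_eq_pderiv]
  fin_cases i <;> assumption

theorem mul_wedge_eq_of_smul_eq {g p f : PS} {ω v η : PS × PS} (h : g • ω = p • v + f • η) :
    g * wedge ω v = f * wedge η v := by
  have h₁ := congrArg Prod.fst h
  have h₂ := congrArg Prod.snd h
  simp only [Prod.smul_fst, Prod.smul_snd, Prod.fst_add, Prod.snd_add, smul_eq_mul] at h₁ h₂
  unfold wedge
  linear_combination v.2 * h₁ - v.1 * h₂

theorem add_mul_smul_eq (ω v : PS × PS) (c : PS) :
    (v.1 + c * v.2) • ω = (ω.1 + c * ω.2) • v + wedge ω v • (c, -1) := by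
  ext : 1 <;>
    simp only [wedge, Prod.smul_fst, Prod.smul_snd, Prod.fst_add, Prod.snd_add, Prod.smul_mk,
      smul_eq_mul] <;>
    ring

theorem saito_membership_criterion (f : PS) (hf : Squarefree f) (ω : PS × PS) :
    (∃ g : PS, IsRelPrime g f ∧ g • ω ∈ FSet f) ↔
      ∃ h : PS, wedge ω (dd f) = h * f := by
  constructor
  · rintro ⟨g, hg, p, η, hgω⟩
    obtain ⟨h, hh⟩ := hg.symm.dvd_of_dvd_mul_left
      ⟨wedge η (dd f), mul_wedge_eq_of_smul_eq hgω⟩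
    exact ⟨h, hh.trans (mul_comm f h)⟩
  · rintro ⟨h, hh⟩
    obtain ⟨c, hc⟩ := exists_isRelPrime_add_smul (K := ℂ) _ _ hf.ne_zero
      fun q hq hqf => not_dvd_pd_one_of_dvd_pd_zero hf hq hqf
    refine ⟨_, hc, ω.1 + algebraMap ℂ PS c * ω.2, h • (algebraMap ℂ PS c, -1), ?_⟩
    rw [Algebra.smul_def c (pd 1 f)]
    have := add_mul_smul_eq ω (dd f) (algebraMap ℂ PS c)
    rw [hh, mul_smul, smul_comm h f] at this
    exact this
end
end

section
/- Let f ∈ ℂ{x,y} be reduced with gcd(f_x, f_y) = 1. A 1-form ω = A dx + B dy with cofactor h (i.e., A f_y − B f_x = h·f) belongs to F(f) = ℂ{x,y}·df + f·Ω¹ if and only if h ∈ J(f) = ⟨f_x, f_y⟩. -/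
open MvPowerSeries

noncomputable section

/-!
If `ω = p·df + f·η`, then `ω ∧ df = f·(η ∧ df)`, so cancelling `f` shows `h = η ∧ df ∈ J(f)`.
Conversely, if `h = u·f_x + v·f_y`, the cofactor equation says exactly
`(A - v f)·f_y = (B + u f)·f_x`. Since `ℂ⟦x,y⟧` is a UFD and `f_x`, `f_y` are coprime, this
forces `A - v f = p·f_x` and `B + u f = p·f_y` for a single `p`, i.e. `ω = p·df + f·(v dx - u dy)`.
Coprimality of `f_x, f_y` also rules out `f = 0`, which legitimates the cancellation.
-/

instance MvPowerSeries.instIsDomain {σ R : Type*} [Ring R] [IsDomain R] :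
    IsDomain (MvPowerSeries σ R) :=
  NoZeroDivisors.to_isDomain _

-- `k⟦x,y⟧ ≅ k⟦y⟧⟦x⟧`, and a power series ring over the principal ideal domain `k⟦y⟧` is a UFD.
instance MvPowerSeries.instUniqueFactorizationMonoidFinTwo {k : Type*} [Field k] :
    UniqueFactorizationMonoid (MvPowerSeries (Fin 2) k) := by
  have : IsPrincipalIdealRing (MvPowerSeries (Fin 1) k) :=
    IsPrincipalIdealRing.of_surjective
      (MvPowerSeries.renameEquiv k (Equiv.ofUnique Unit (Fin 1))).toRingEquiv
      (MvPowerSeries.renameEquiv k _).surjective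
  exact (MvPowerSeries.finSuccEquiv k 1).symm.toMulEquiv.uniqueFactorizationMonoid inferInstance

theorem IsRelPrime.exists_eq_mul_of_mul_eq_mul {R : Type*} [CommMonoidWithZero R]
    [IsCancelMulZero R] [DecompositionMonoid R] {a b x y : R} (hab : IsRelPrime a b)
    (h : x * b = y * a) :
    ∃ p, x = p * a ∧ y = p * b := by
  obtain ⟨p, rfl⟩ : a ∣ x := hab.dvd_of_dvd_mul_right ⟨y, by rw [h, mul_comm]⟩
  rcases eq_or_ne a 0 with rfl | ha
  · obtain ⟨u, rfl⟩ := isRelPrime_zero_left.mp hab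
    exact ⟨y * ↑u⁻¹, by simp, by simp [mul_assoc]⟩
  · refine ⟨p, mul_comm a p, mul_left_cancel₀ ha ?_⟩
    rw [mul_comm, ← h, mul_assoc]

lemma pd_zero (i : Fin 2) : pd i 0 = 0 := by
  funext m
  exact mul_eq_zero_of_right _ (map_zero _)

lemma ne_zero_of_isRelPrime_pd {f : PS} (hcop : IsRelPrime (pd 0 f) (pd 1 f)) : f ≠ 0 := by
  rintro rfl
  simp only [pd_zero] at hcop
  exact not_isUnit_zero (isRelPrime_zero_left.mp hcop)

lemma mem_FSet_iff {f A B : PS} :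
    (A, B) ∈ FSet f ↔ ∃ p a b, A = p * pd 0 f + f * a ∧ B = p * pd 1 f + f * b := by
  simp [FSet, dd, Prod.ext_iff]

theorem mem_F_iff_cofactor_in_jacobian_general (f : PS)
    (hcop : IsRelPrime (pd 0 f) (pd 1 f))
    (A B h : PS) (hc : A * pd 1 f - B * pd 0 f = h * f) :
    (A, B) ∈ FSet f ↔ h ∈ Ideal.span {pd 0 f, pd 1 f} := by
  have hf : f ≠ 0 := ne_zero_of_isRelPrime_pd hcop
  rw [mem_FSet_iff, Ideal.mem_span_pair]
  constructor
  · rintro ⟨p, a, b, rfl, rfl⟩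
    exact ⟨-b, a, mul_right_cancel₀ hf (by linear_combination hc)⟩
  · rintro ⟨u, v, rfl⟩
    obtain ⟨p, hA, hB⟩ :=
      hcop.exists_eq_mul_of_mul_eq_mul (x := A - v * f) (y := B + u * f) (by linear_combination hc)
    exact ⟨p, v, -u, by linear_combination hA, by linear_combination hB⟩

theorem mem_F_iff_cofactor_in_jacobian (f : PS) (hf : Squarefree f)
    (hcop : IsRelPrime (pd 0 f) (pd 1 f))
    (A B h : PS) (hc : A * pd 1 f - B * pd 0 f = h * f) :
    (A, B) ∈ FSet f ↔ h ∈ Ideal.span {pd 0 f, pd 1 f} :=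
  mem_F_iff_cofactor_in_jacobian_general f hcop A B h hc
end
end

section
/- Let f = f₁f₂ ∈ ℂ{x,y} be reduced and let {ω₁, ω₂} be a Saito basis of S(f₁) with ω₁ ∧ ω₂ = u·f₁·dx∧dy (u a unit) and ωᵢ ∧ df₁ = hᵢ·f₁·dx∧dy. Suppose ωᵢ ∧ df₂ = (Rᵢ + Hᵢ·f₂)·dx∧dy with Rᵢ ∉ ⟨f₂⟩, let G = gcd(R₁, R₂), and suppose there exist S₁, S₂ ∈ ℂ{x,y} with S₁·(R₁/G) + S₂·(R₂/G) = v·f₂ for a unit v. Then η₁ := (R₂·ω₁ − R₁·ω₂)/G and η₂ := S₁·ω₁ + S₂·ω₂ satisfy η₁, η₂ ∈ S(f₁f₂) and η₁ ∧ η₂ = u·v·f₁f₂·dx∧dy; hence {η₁, η₂} is a Saito basis of S(f₁f₂). -/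
/-!
By the Leibniz rule, `ω ∧ d(f₁f₂) = f₂ (ω ∧ df₁) + f₁ (ω ∧ df₂)`, so `S(f₁) ∩ S(f₂) ⊆ S(f₁f₂)`.
Both `ηᵢ` lie in the module `S(f₁)` as combinations of `ω₁, ω₂`. Modulo `f₂`,
`η₁ ∧ df₂ ≡ r₂R₁ - r₁R₂ = 0` and `η₂ ∧ df₂ ≡ G (S₁r₁ + S₂r₂) = G v f₂`, so both lie in `S(f₂)`.
Finally `η₁ ∧ η₂ = (r₁S₁ + r₂S₂) (ω₁ ∧ ω₂) = v f₂ · u f₁`.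
-/

open MvPowerSeries

noncomputable section

theorem dd_mul (f g : PS) : dd (f * g) = g • dd f + f • dd g := by
  simp only [dd, pd_eq_pderiv, Derivation.leibniz, smul_eq_mul, Prod.smul_mk, Prod.mk_add_mk,
    add_comm]

section Wedge

variable (ω η θ : PS × PS) (a : PS)

theorem wedge_add_left : wedge (ω + η) θ = wedge ω θ + wedge η θ := by
  simp only [wedge, Prod.fst_add, Prod.snd_add]; ring

theorem wedge_sub_left : wedge (ω - η) θ = wedge ω θ - wedge η θ := by
  simp only [wedge, Prod.fst_sub, Prod.snd_sub]; ring

theorem wedge_smul_left : wedge (a • ω) θ = a * wedge ω θ := by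
  simp only [wedge, Prod.smul_fst, Prod.smul_snd, smul_eq_mul]; ring

theorem wedge_add_right : wedge ω (η + θ) = wedge ω η + wedge ω θ := by
  simp only [wedge, Prod.fst_add, Prod.snd_add]; ring

theorem wedge_smul_right : wedge ω (a • η) = a * wedge ω η := by
  simp only [wedge, Prod.smul_fst, Prod.smul_snd, smul_eq_mul]; ring

theorem wedge_self : wedge ω ω = 0 := by
  simp only [wedge]; ring

theorem wedge_swap : wedge η ω = -wedge ω η := by
  simp only [wedge]; ring

theorem wedge_dd_mul (f g : PS) :
    wedge ω (dd (f * g)) = g * wedge ω (dd f) + f * wedge ω (dd g) := by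
  rw [dd_mul, wedge_add_right, wedge_smul_right, wedge_smul_right]

end Wedge

def saitoSubmodule (f : PS) : Submodule PS (PS × PS) where
  carrier := SaitoSet f
  zero_mem' := ⟨0, by simp [wedge]⟩
  add_mem' := by
    rintro ω η ⟨a, ha⟩ ⟨b, hb⟩
    exact ⟨a + b, by rw [wedge_add_left, ha, hb, add_mul]⟩
  smul_mem' := by
    rintro c ω ⟨a, ha⟩
    exact ⟨c * a, by rw [wedge_smul_left, ha, mul_assoc]⟩

theorem mem_saitoSet_mul {f g : PS} {ω : PS × PS} (hf : ω ∈ SaitoSet f) (hg : ω ∈ SaitoSet g) :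
    ω ∈ SaitoSet (f * g) := by
  obtain ⟨a, ha⟩ := hf
  obtain ⟨b, hb⟩ := hg
  exact ⟨a + b, by rw [wedge_dd_mul, ha, hb]; ring⟩

theorem saito_basis_of_product_general (f₁ f₂ : PS)
    (ω₁ ω₂ : PS × PS) (hω₁ : ω₁ ∈ SaitoSet f₁) (hω₂ : ω₂ ∈ SaitoSet f₁)
    (u : PS) (hbasis : wedge ω₁ ω₂ = u * f₁)
    (R₁ R₂ H₁ H₂ : PS)
    (w₁ : wedge ω₁ (dd f₂) = R₁ + H₁ * f₂) (w₂ : wedge ω₂ (dd f₂) = R₂ + H₂ * f₂)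
    (G r₁ r₂ : PS) (hGr₁ : R₁ = G * r₁) (hGr₂ : R₂ = G * r₂)
    (S₁ S₂ v : PS) (hS : S₁ * r₁ + S₂ * r₂ = v * f₂) :
    r₂ • ω₁ - r₁ • ω₂ ∈ SaitoSet (f₁ * f₂) ∧
    S₁ • ω₁ + S₂ • ω₂ ∈ SaitoSet (f₁ * f₂) ∧
    wedge (r₂ • ω₁ - r₁ • ω₂) (S₁ • ω₁ + S₂ • ω₂) = u * v * (f₁ * f₂) := by
  subst hGr₁ hGr₂
  have hω₁ : ω₁ ∈ saitoSubmodule f₁ := hω₁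
  have hω₂ : ω₂ ∈ saitoSubmodule f₁ := hω₂
  have hη₁ : r₂ • ω₁ - r₁ • ω₂ ∈ saitoSubmodule f₁ :=
    sub_mem (Submodule.smul_mem _ _ hω₁) (Submodule.smul_mem _ _ hω₂)
  have hη₂ : S₁ • ω₁ + S₂ • ω₂ ∈ saitoSubmodule f₁ :=
    add_mem (Submodule.smul_mem _ _ hω₁) (Submodule.smul_mem _ _ hω₂)
  refine ⟨mem_saitoSet_mul hη₁ ?_, mem_saitoSet_mul hη₂ ?_, ?_⟩
  · refine ⟨r₂ * H₁ - r₁ * H₂, ?_⟩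
    rw [wedge_sub_left, wedge_smul_left, wedge_smul_left, w₁, w₂]
    ring
  · refine ⟨S₁ * H₁ + S₂ * H₂ + G * v, ?_⟩
    rw [wedge_add_left, wedge_smul_left, wedge_smul_left, w₁, w₂]
    linear_combination G * hS
  · simp only [wedge_sub_left, wedge_add_right, wedge_smul_left, wedge_smul_right, wedge_self,
      wedge_swap ω₁ ω₂, hbasis]
    linear_combination u * f₁ * hS

theorem saito_basis_of_product (f₁ f₂ : PS) (hf : Squarefree (f₁ * f₂))
    (ω₁ ω₂ : PS × PS) (hω₁ : ω₁ ∈ SaitoSet f₁) (hω₂ : ω₂ ∈ SaitoSet f₁)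
    (u : PS) (hu : IsUnit u) (hbasis : wedge ω₁ ω₂ = u * f₁)
    (h₁ h₂ : PS) (e₁ : wedge ω₁ (dd f₁) = h₁ * f₁) (e₂ : wedge ω₂ (dd f₁) = h₂ * f₁)
    (R₁ R₂ H₁ H₂ : PS)
    (w₁ : wedge ω₁ (dd f₂) = R₁ + H₁ * f₂) (w₂ : wedge ω₂ (dd f₂) = R₂ + H₂ * f₂)
    (hR₁ : ¬ f₂ ∣ R₁) (hR₂ : ¬ f₂ ∣ R₂)
    (G r₁ r₂ : PS) (hGr₁ : R₁ = G * r₁) (hGr₂ : R₂ = G * r₂)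
    (hGgcd : ∀ e : PS, e ∣ R₁ → e ∣ R₂ → e ∣ G)
    (S₁ S₂ v : PS) (hv : IsUnit v) (hS : S₁ * r₁ + S₂ * r₂ = v * f₂) :
    r₂ • ω₁ - r₁ • ω₂ ∈ SaitoSet (f₁ * f₂) ∧
    S₁ • ω₁ + S₂ • ω₂ ∈ SaitoSet (f₁ * f₂) ∧
    wedge (r₂ • ω₁ - r₁ • ω₂) (S₁ • ω₁ + S₂ • ω₂) = u * v * (f₁ * f₂) :=
  saito_basis_of_product_general f₁ f₂ ω₁ ω₂ hω₁ hω₂ u hbasis R₁ R₂ H₁ H₂ w₁ w₂ G r₁ r₂ hGr₁ hGr₂ S₁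
    S₂ v hS
end
end
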